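/- arXiv:2008.10157 — 2 statements merged into one kernel-verified Lean document; each statement's English description precedes it below -/
import Mathlib

section
/- Let H^t := ∇²f(x^t) + εI (which is invertible). Let x^t, v^t ∈ ℝ^{np} be generated by the primal–dual iteration x^{t+1} = x^t − (H^t)^{-1}[∇f(x^t) + (I − 𝐖)^{1/2} v^t + α(I − 𝐖)x^t], v^{t+1} = v^t + α(I − 𝐖)^{1/2} x^{t+1}, initialized with x^0 = 0 and v^0 = 0; and let x̃^t, u^t ∈ ℝ^{np} be generated by the Newton tracking recursion x̃^{t+1} = x̃^t − u^t, u^{t+1} = (∇²f(x̃^{t+1}) + εI)^{-1}[ (∇²f(x̃^t) + εI)u^t + ∇f(x̃^{t+1}) − ∇f(x̃^t) + α(I − 𝐖)(2x̃^{t+1} − x̃^t) ], initialized with x̃^0 = 0 and u^0 = (∇²f(0) + εI)^{-1}∇f(0). Then x^t = x̃^t for every t ≥ 0, and u^t = x^t − x^{t+1} for every t ≥ 0. -/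
open Matrix Kronecker
open scoped InnerProductSpace

noncomputable section

/-- Local decision space `ℝ^p`. -/
abbrev Ep (p : ℕ) : Type := EuclideanSpace ℝ (Fin p)

/-- Stacked space `ℝ^{np}`. -/
abbrev Vnp (n p : ℕ) : Type := EuclideanSpace ℝ (Fin n × Fin p)

/-- The `i`-th block `x_i ∈ ℝ^p` of a stacked vector `x ∈ ℝ^{np}`. -/
def blk {n p : ℕ} (x : Vnp n p) (i : Fin n) : Ep p := WithLp.toLp 2 (fun j => x (i, j))

/-- Aggregate objective `f(x) = ∑ i, f_i(x_i)`. -/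
def aggF {n p : ℕ} (f : Fin n → Ep p → ℝ) (x : Vnp n p) : ℝ := ∑ i, f i (blk x i)

/-- Stacked gradient `∇f(x) = [∇f_1(x_1); …; ∇f_n(x_n)]`. -/
def aggGrad {n p : ℕ} (g : Fin n → Ep p → Ep p) (x : Vnp n p) : Vnp n p :=
  WithLp.toLp 2 (fun ij : Fin n × Fin p => g ij.1 (blk x ij.1) ij.2)

/-- Block-diagonal Hessian `∇²f(x)` applied to `w`. -/
def aggHess {n p : ℕ} (h : Fin n → Ep p → (Ep p →L[ℝ] Ep p)) (x w : Vnp n p) : Vnp n p :=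
  WithLp.toLp 2 (fun ij : Fin n × Fin p => h ij.1 (blk x ij.1) (blk w ij.1) ij.2)

/-- Square root of a positive semidefinite matrix (Mathlib's former `Matrix.PosSemidef.sqrt`). -/
def Matrix.PosSemidef.sqrt {m : Type*} [Fintype m] [DecidableEq m]
    {A : Matrix m m ℝ} (hA : A.PosSemidef) : Matrix m m ℝ :=
  hA.1.eigenvectorUnitary.1 * diagonal ((↑) ∘ (√·) ∘ hA.1.eigenvalues) *
    (star hA.1.eigenvectorUnitary : Matrix m m ℝ)

/-- `𝐖 = W ⊗ I_p`. -/
def bigW {n : ℕ} (p : ℕ) (W : Matrix (Fin n) (Fin n) ℝ) :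
    Matrix (Fin n × Fin p) (Fin n × Fin p) ℝ :=
  W ⊗ₖ (1 : Matrix (Fin p) (Fin p) ℝ)

/-- `I − 𝐖`. -/
def IWmat {n : ℕ} (p : ℕ) (W : Matrix (Fin n) (Fin n) ℝ) :
    Matrix (Fin n × Fin p) (Fin n × Fin p) ℝ :=
  1 - bigW p W

/-! Differencing two consecutive primal steps and substituting the dual update turns
`(I − 𝐖)^{1/2} (v^{t+1} − v^t)` into `α (I − 𝐖) x^{t+1}`, which eliminates the dual variable: the
differences `x^t − x^{t+1}` satisfy the Newton tracking recursion. Since `∇²f(z) + εI` is injective,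
that recursion determines `u^{t+1}` from `x^{t+1}` and `u^t`, and both sequences start from the
same data. -/

theorem Matrix.PosSemidef.sqrt_mul_sqrt {m : Type*} [Fintype m] [DecidableEq m]
    {A : Matrix m m ℝ} (hA : A.PosSemidef) : hA.sqrt * hA.sqrt = A := by
  set U : Matrix m m ℝ := hA.1.eigenvectorUnitary.1
  set D : Matrix m m ℝ := diagonal ((↑) ∘ (√·) ∘ hA.1.eigenvalues)
  have hU : star U * U = 1 := Unitary.star_mul_self_of_mem hA.1.eigenvectorUnitary.2
  have hD : D * D = diagonal ((↑) ∘ hA.1.eigenvalues) := by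
    rw [diagonal_mul_diagonal]
    congr 1
    funext i
    simp [Real.mul_self_sqrt (hA.eigenvalues_nonneg i)]
  calc hA.sqrt * hA.sqrt = U * (D * (star U * U) * D) * star U := by
        simp only [Matrix.PosSemidef.sqrt, U, D, Matrix.mul_assoc]
    _ = U * diagonal ((↑) ∘ hA.1.eigenvalues) * star U := by
        rw [hU, Matrix.mul_one, hD]
    _ = A := by
        conv_rhs => rw [hA.1.spectral_theorem, Unitary.conjStarAlgAut_apply]
        rfl

section Newton

variable {n p : ℕ} (h : Fin n → Ep p → (Ep p →L[ℝ] Ep p))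

theorem aggHess_sub (z a b : Vnp n p) :
    aggHess h z (a - b) = aggHess h z a - aggHess h z b := by
  ext ij
  show (h ij.1 (blk z ij.1)) (blk a ij.1 - blk b ij.1) ij.2 = _
  rw [map_sub]
  rfl

theorem inner_aggHess_self (z w : Vnp n p) :
    ⟪aggHess h z w, w⟫_ℝ = ∑ i, ⟪(h i (blk z i)) (blk w i), blk w i⟫_ℝ := by
  simp only [PiLp.inner_apply, RCLike.inner_apply, starRingEnd_apply, star_trivial]
  rw [Fintype.sum_prod_type]
  simp [aggHess, blk]

variable {h} {g : Fin n → Ep p → Ep p} {A : Matrix (Fin n × Fin p) (Fin n × Fin p) ℝ} {α ε : ℝ}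

theorem aggHess_add_smul_injective (hpos : ∀ i z w, 0 ≤ ⟪(h i z) w, w⟫_ℝ) (hε : 0 < ε)
    (z : Vnp n p) : Function.Injective fun w => aggHess h z w + ε • w := by
  intro a b hab
  set w := a - b
  have hzero : aggHess h z w + ε • w = 0 := by
    simp only [w, aggHess_sub, smul_sub]
    rw [sub_add_sub_comm, sub_eq_zero]
    exact hab
  have hHess : 0 ≤ ⟪aggHess h z w, w⟫_ℝ := by
    rw [inner_aggHess_self]
    exact Finset.sum_nonneg fun i _ => hpos i _ _
  have hnorm : ε * ‖w‖ ^ 2 ≤ 0 := by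
    have := congrArg (⟪·, w⟫_ℝ) hzero
    simp only [inner_add_left, real_inner_smul_left, real_inner_self_eq_norm_sq,
      inner_zero_left] at this
    linarith
  have hw : ‖w‖ = 0 := (sq_nonpos_iff _).mp (nonpos_of_mul_nonpos_right hnorm hε)
  exact sub_eq_zero.mp (norm_eq_zero.mp hw)

structure IsNewtonTracking (h : Fin n → Ep p → (Ep p →L[ℝ] Ep p)) (g : Fin n → Ep p → Ep p)
    (A : Matrix (Fin n × Fin p) (Fin n × Fin p) ℝ) (α ε : ℝ) (x u : ℕ → Vnp n p) : Prop where
  step : ∀ t, x (t + 1) = x t - u t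
  update : ∀ t, aggHess h (x (t + 1)) (u (t + 1)) + ε • u (t + 1) =
    aggHess h (x t) (u t) + ε • u t + aggGrad g (x (t + 1)) - aggGrad g (x t)
      + α • toEuclideanLin A ((2 : ℝ) • x (t + 1) - x t)

theorem IsNewtonTracking.of_primalDual {S : Matrix (Fin n × Fin p) (Fin n × Fin p) ℝ}
    (hS : S * S = A) {x v : ℕ → Vnp n p}
    (hprimal : ∀ t, aggHess h (x t) (x t - x (t + 1)) + ε • (x t - x (t + 1)) =
      aggGrad g (x t) + toEuclideanLin S (v t) + α • toEuclideanLin A (x t))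
    (hdual : ∀ t, v (t + 1) = v t + α • toEuclideanLin S (x (t + 1))) :
    IsNewtonTracking h g A α ε x fun t => x t - x (t + 1) where
  step t := (sub_sub_cancel _ _).symm
  update t := by
    rw [hprimal, hprimal, hdual, map_add, _root_.map_smul, ← LinearMap.comp_apply,
      ← toLpLin_mul_same, hS, map_sub, _root_.map_smul]
    module

theorem IsNewtonTracking.unique
    (hinj : ∀ z, Function.Injective fun w => aggHess h z w + ε • w)
    {x u x' u' : ℕ → Vnp n p} (hxu : IsNewtonTracking h g A α ε x u)
    (hxu' : IsNewtonTracking h g A α ε x' u') (hx0 : x 0 = x' 0)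
    (hu0 : aggHess h (x 0) (u 0) + ε • u 0 = aggHess h (x 0) (u' 0) + ε • u' 0) :
    x = x' ∧ u = u' := by
  have key : ∀ t, x t = x' t ∧ u t = u' t := by
    intro t
    induction t with
    | zero => exact ⟨hx0, hinj _ hu0⟩
    | succ t ih =>
      have hx : x (t + 1) = x' (t + 1) := by rw [hxu.step, hxu'.step, ih.1, ih.2]
      refine ⟨hx, hinj (x (t + 1)) ?_⟩
      dsimp only
      rw [hxu.update, hx, hxu'.update, ← hx, ih.1, ih.2]
  exact ⟨funext fun t => (key t).1, funext fun t => (key t).2⟩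

end Newton

theorem newton_tracking_primal_dual_equivalence_general
    {n p : ℕ}
    (W : Matrix (Fin n) (Fin n) ℝ)
    (hpsd : (IWmat p W).PosSemidef)
    (g : Fin n → Ep p → Ep p)
    (h : Fin n → Ep p → (Ep p →L[ℝ] Ep p))
    (μf : ℝ) (hμpos : 0 < μf)
    (hlow : ∀ i z w, μf * ‖w‖ ^ 2 ≤ ⟪(h i z) w, w⟫_ℝ)
    (α ε : ℝ) (hε : 0 < ε)
    -- the primal–dual iteration
    (x v : ℕ → Vnp n p)
    (hprimal : ∀ t, aggHess h (x t) (x t - x (t + 1)) + ε • (x t - x (t + 1)) =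
      aggGrad g (x t) + Matrix.toEuclideanLin hpsd.sqrt (v t)
        + α • Matrix.toEuclideanLin (IWmat p W) (x t))
    (hdual : ∀ t, v (t + 1) = v t + α • Matrix.toEuclideanLin hpsd.sqrt (x (t + 1)))
    (hx0 : x 0 = 0) (hv0 : v 0 = 0)
    -- the Newton tracking recursion
    (xt u : ℕ → Vnp n p)
    (hnt1 : ∀ t, xt (t + 1) = xt t - u t)
    (hnt2 : ∀ t, aggHess h (xt (t + 1)) (u (t + 1)) + ε • u (t + 1) =
      aggHess h (xt t) (u t) + ε • u t
        + aggGrad g (xt (t + 1)) - aggGrad g (xt t)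
        + α • Matrix.toEuclideanLin (IWmat p W) ((2 : ℝ) • xt (t + 1) - xt t))
    (hxt0 : xt 0 = 0)
    (hu0 : aggHess h (xt 0) (u 0) + ε • u 0 = aggGrad g (xt 0)) :
    (∀ t, x t = xt t) ∧ (∀ t, u t = x t - x (t + 1)) := by
  have hinj := aggHess_add_smul_injective
    (fun i z w => (mul_nonneg hμpos.le (sq_nonneg ‖w‖)).trans (hlow i z w)) hε
  have hpd := IsNewtonTracking.of_primalDual hpsd.sqrt_mul_sqrt hprimal hdual
  have hx0' : x 0 = xt 0 := hx0.trans hxt0.symm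
  have hinit :
      aggHess h (x 0) (x 0 - x 1) + ε • (x 0 - x 1) = aggHess h (x 0) (u 0) + ε • u 0 := by
    rw [hprimal, hv0, hx0', hu0, hxt0]
    simp
  obtain ⟨hx, hu⟩ := hpd.unique hinj ⟨hnt1, hnt2⟩ hx0' hinit
  exact ⟨congrFun hx, fun t => (congrFun hu t).symm⟩

/-- Equivalence of the primal–dual iteration and the Newton tracking recursion:
`x^t = x̃^t` and `u^t = x^t − x^{t+1}` for all `t`. -/
theorem newton_tracking_primal_dual_equivalence
    {n p : ℕ} (hn : 0 < n) (hp : 0 < p)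
    (W : Matrix (Fin n) (Fin n) ℝ)
    (hWnonneg : ∀ i j, 0 ≤ W i j) (hWsymm : W.IsSymm)
    (hWstoch : W *ᵥ (fun _ => (1 : ℝ)) = fun _ => 1)
    (hWker : ∀ y : Fin n → ℝ, (1 - W) *ᵥ y = 0 ↔ ∃ c : ℝ, y = fun _ => c)
    (hpsd : (IWmat p W).PosSemidef)
    (f : Fin n → Ep p → ℝ) (g : Fin n → Ep p → Ep p)
    (h : Fin n → Ep p → (Ep p →L[ℝ] Ep p))
    (μf Lf : ℝ) (hμpos : 0 < μf) (hμL : μf ≤ Lf)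
    (hC2 : ∀ i, ContDiff ℝ 2 (f i))
    (hg : ∀ i z, HasGradientAt (f i) (g i z) z)
    (hh : ∀ i z, HasFDerivAt (g i) (h i z) z)
    (hlow : ∀ i z w, μf * ‖w‖ ^ 2 ≤ ⟪(h i z) w, w⟫_ℝ)
    (hup : ∀ i z w, ⟪(h i z) w, w⟫_ℝ ≤ Lf * ‖w‖ ^ 2)
    (α ε : ℝ) (hα : 0 < α) (hε : 0 < ε)
    -- the primal–dual iteration
    (x v : ℕ → Vnp n p)
    (hprimal : ∀ t, aggHess h (x t) (x t - x (t + 1)) + ε • (x t - x (t + 1)) =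
      aggGrad g (x t) + Matrix.toEuclideanLin hpsd.sqrt (v t)
        + α • Matrix.toEuclideanLin (IWmat p W) (x t))
    (hdual : ∀ t, v (t + 1) = v t + α • Matrix.toEuclideanLin hpsd.sqrt (x (t + 1)))
    (hx0 : x 0 = 0) (hv0 : v 0 = 0)
    -- the Newton tracking recursion
    (xt u : ℕ → Vnp n p)
    (hnt1 : ∀ t, xt (t + 1) = xt t - u t)
    (hnt2 : ∀ t, aggHess h (xt (t + 1)) (u (t + 1)) + ε • u (t + 1) =
      aggHess h (xt t) (u t) + ε • u t
        + aggGrad g (xt (t + 1)) - aggGrad g (xt t)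
        + α • Matrix.toEuclideanLin (IWmat p W) ((2 : ℝ) • xt (t + 1) - xt t))
    (hxt0 : xt 0 = 0)
    (hu0 : aggHess h (xt 0) (u 0) + ε • u 0 = aggGrad g (xt 0)) :
    (∀ t, x t = xt t) ∧ (∀ t, u t = x t - x (t + 1)) :=
  newton_tracking_primal_dual_equivalence_general W hpsd g h μf hμpos hlow α ε hε x v hprimal hdual
    hx0 hv0 xt u hnt1 hnt2 hxt0 hu0
end
end

section
/- Under the Newton tracking primal–dual iteration, suppose v^{t+1} − v* lies in the column space of (I − 𝐖)^{1/2}. Then for any constants β > 1 and φ > 1 and for κ := 2L_f + α·λ_max(I − 𝐖), it holds that ‖v^{t+1} − v*‖² ≤ (1/λ̂_min(I − 𝐖)) · [ ( β·ε²/(β−1) + β·φ·κ²/(φ−1) )·‖x^{t+1} − x^t‖² + β·φ·L_f²·‖x^{t+1} − x*‖² ]. -/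
/-!
Write `S = (I - 𝐖)^{1/2}` and `Δ = x^{t+1} - x^t`. The primal step, the dual step and the
optimality condition `∇f(x*) + S v* = 0` split `S (v^{t+1} - v*)` into `-ε Δ`, the Newton
remainder `∇²f(x^t)(-Δ) - (∇f(x^t) - ∇f(x^{t+1})) + α (I - 𝐖) Δ`, and `∇f(x*) - ∇f(x^{t+1})`.
The curvature bounds give `‖∇²f‖ ≤ L_f` and make `∇f` `L_f`-Lipschitz, so these pieces have norms
at most `ε‖Δ‖`, `κ‖Δ‖` and `L_f‖x^{t+1} - x*‖`; two Young splittings `(a + b)² ≤ θ/(θ-1) a² + θ b²`,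
with `θ = β` and `θ = φ`, produce the bracket. Finally `v^{t+1} - v* = S y`, and in an eigenbasis
of `S` every nonzero coefficient is scaled by some `σ` with `σ² ≥ λ̂_min(I - 𝐖)`, whence
`λ̂_min(I - 𝐖) ‖S y‖² ≤ ‖S (S y)‖²`.
-/

open Matrix Kronecker
open scoped InnerProductSpace

noncomputable section

/-- Largest eigenvalue of a (square, real) matrix. -/
def lamMax {m : Type*} [Fintype m] [DecidableEq m] (A : Matrix m m ℝ) : ℝ :=
  sSup {r : ℝ | Module.End.HasEigenvalue (Matrix.toLin' A) r}

/-- Smallest nonzero eigenvalue of a (square, real) matrix. -/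
def lamMinNZ {m : Type*} [Fintype m] [DecidableEq m] (A : Matrix m m ℝ) : ℝ :=
  sInf {r : ℝ | r ≠ 0 ∧ Module.End.HasEigenvalue (Matrix.toLin' A) r}

theorem add_sq_le_of_one_lt (x y : ℝ) {θ : ℝ} (hθ : 1 < θ) :
    (x + y) ^ 2 ≤ θ / (θ - 1) * x ^ 2 + θ * y ^ 2 := by
  have hθ' : 0 < θ - 1 := by linarith
  have hgap_nonneg : 0 ≤ (x - (θ - 1) * y) ^ 2 / (θ - 1) := by positivity
  have hgap : θ / (θ - 1) * x ^ 2 + θ * y ^ 2 - (x + y) ^ 2 = (x - (θ - 1) * y) ^ 2 / (θ - 1) := by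
    field_simp
    ring
  linarith

theorem norm_add_add_sq_le_of_one_lt {E : Type*} [SeminormedAddCommGroup E] {a b c : E}
    {A B C β φ : ℝ} (hβ : 1 < β) (hφ : 1 < φ) (ha : ‖a‖ ≤ A) (hb : ‖b‖ ≤ B) (hc : ‖c‖ ≤ C) :
    ‖a + (b + c)‖ ^ 2 ≤ β / (β - 1) * A ^ 2 + β * (φ / (φ - 1) * B ^ 2 + φ * C ^ 2) := by
  calc ‖a + (b + c)‖ ^ 2 ≤ (A + (B + C)) ^ 2 := by
        gcongr
        exact (norm_add_le _ _).trans (add_le_add ha ((norm_add_le _ _).trans (add_le_add hb hc)))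
    _ ≤ β / (β - 1) * A ^ 2 + β * (B + C) ^ 2 := add_sq_le_of_one_lt _ _ hβ
    _ ≤ _ := by gcongr; exact add_sq_le_of_one_lt _ _ hφ

namespace Module.End

variable {E : Type*} [NormedAddCommGroup E] [InnerProductSpace ℝ E] {T : End ℝ E} {μ : ℝ}

theorem HasEigenvector.inner_apply_self {w : E} (hw : T.HasEigenvector μ w) :
    ⟪T w, w⟫_ℝ = μ * ‖w‖ ^ 2 := by
  rw [hw.apply_eq_smul, real_inner_smul_left, real_inner_self_eq_norm_sq]

theorem HasEigenvalue.le_of_inner_le (hμ : T.HasEigenvalue μ) {L : ℝ}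
    (hL : ∀ w, ⟪T w, w⟫_ℝ ≤ L * ‖w‖ ^ 2) : μ ≤ L := by
  obtain ⟨w, hw⟩ := hμ.exists_hasEigenvector
  have hw0 : 0 < ‖w‖ ^ 2 := pow_pos (norm_pos_iff.2 hw.2) 2
  exact le_of_mul_le_mul_right (hw.inner_apply_self ▸ hL w) hw0

theorem HasEigenvalue.le_of_le_inner (hμ : T.HasEigenvalue μ) {a : ℝ}
    (ha : ∀ w, a * ‖w‖ ^ 2 ≤ ⟪T w, w⟫_ℝ) : a ≤ μ := by
  obtain ⟨w, hw⟩ := hμ.exists_hasEigenvector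
  have hw0 : 0 < ‖w‖ ^ 2 := pow_pos (norm_pos_iff.2 hw.2) 2
  exact le_of_mul_le_mul_right (hw.inner_apply_self ▸ ha w) hw0

end Module.End

namespace LinearMap.IsSymmetric

variable {E : Type*} [NormedAddCommGroup E] [InnerProductSpace ℝ E] [FiniteDimensional ℝ E]
  {T : E →ₗ[ℝ] E}

theorem sq_norm_apply_eq_sum {n : ℕ} (hT : T.IsSymmetric) (hn : Module.finrank ℝ E = n) (u : E) :
    ‖T u‖ ^ 2 = ∑ i, (hT.eigenvalues hn i * (hT.eigenvectorBasis hn).repr u i) ^ 2 := by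
  rw [← (hT.eigenvectorBasis hn).repr.norm_map, EuclideanSpace.real_norm_sq_eq]
  simp only [hT.eigenvectorBasis_apply_self_apply, RCLike.ofReal_real_eq_id, id_eq]

theorem norm_apply_le_of_abs_le (hT : T.IsSymmetric) {C : ℝ} (hC : 0 ≤ C)
    (h : ∀ μ, Module.End.HasEigenvalue T μ → |μ| ≤ C) (u : E) : ‖T u‖ ≤ C * ‖u‖ := by
  obtain ⟨n, hn⟩ : ∃ n, Module.finrank ℝ E = n := ⟨_, rfl⟩
  refine (pow_le_pow_iff_left₀ (norm_nonneg _) (by positivity) two_ne_zero).1 ?_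
  rw [hT.sq_norm_apply_eq_sum hn, mul_pow, ← (hT.eigenvectorBasis hn).repr.norm_map u,
    EuclideanSpace.real_norm_sq_eq, Finset.mul_sum]
  refine Finset.sum_le_sum fun i _ => ?_
  have hμ : |hT.eigenvalues hn i| ≤ C := h _ (hT.hasEigenvalue_eigenvalues hn i)
  rw [mul_pow]
  exact mul_le_mul_of_nonneg_right (sq_le_sq' (abs_le.1 hμ).1 (abs_le.1 hμ).2) (sq_nonneg _)

theorem mul_sq_norm_apply_le (hT : T.IsSymmetric) {c : ℝ}
    (hc : ∀ μ, μ ≠ 0 → Module.End.HasEigenvalue (T * T) μ → c ≤ μ) (u : E) :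
    c * ‖T u‖ ^ 2 ≤ ‖T (T u)‖ ^ 2 := by
  obtain ⟨n, hn⟩ : ∃ n, Module.finrank ℝ E = n := ⟨_, rfl⟩
  set b := hT.eigenvectorBasis hn
  set σ := hT.eigenvalues hn
  rw [hT.sq_norm_apply_eq_sum hn (T u), hT.sq_norm_apply_eq_sum hn, Finset.mul_sum]
  refine Finset.sum_le_sum fun i _ => ?_
  rw [hT.eigenvectorBasis_apply_self_apply, RCLike.ofReal_real_eq_id, id_eq]
  rcases eq_or_ne (σ i) 0 with hσ | hσ
  · simp [σ, hσ]
  have hsq : Module.End.HasEigenvalue (T * T) (σ i ^ 2) := by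
    refine Module.End.hasEigenvalue_of_hasEigenvector (x := b i) ⟨?_, b.toBasis.ne_zero i⟩
    rw [Module.End.mem_eigenspace_iff, Module.End.mul_apply, hT.apply_eigenvectorBasis,
      map_smul, hT.apply_eigenvectorBasis, smul_smul, sq]
    rfl
  calc c * (σ i * b.repr u i) ^ 2 ≤ σ i ^ 2 * (σ i * b.repr u i) ^ 2 := by
        gcongr
        exact hc _ (pow_ne_zero 2 hσ) hsq
    _ = _ := by ring

end LinearMap.IsSymmetric

namespace Matrix

variable {m : Type*} [Fintype m] [DecidableEq m] {A : Matrix m m ℝ}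

theorem hasEigenvalue_toEuclideanLin_iff {μ : ℝ} :
    Module.End.HasEigenvalue (toEuclideanLin A) μ ↔ Module.End.HasEigenvalue (toLin' A) μ := by
  rw [Module.End.hasEigenvalue_iff_isRoot_charpoly, Module.End.hasEigenvalue_iff_isRoot_charpoly,
    show (toEuclideanLin A).charpoly = A.charpoly from charpoly_toLin A (PiLp.basisFun 2 ℝ m),
    charpoly_toLin']

namespace PosSemidef

theorem nonneg_of_hasEigenvalue (hA : A.PosSemidef) {μ : ℝ}
    (hμ : Module.End.HasEigenvalue (toLin' A) μ) : 0 ≤ μ :=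
  (hasEigenvalue_toEuclideanLin_iff.2 hμ).le_of_le_inner fun w => by
    simpa using (isPositive_toEuclideanLin_iff.2 hA).inner_nonneg_left w

theorem sqrt_eq_conjStarAlgAut (hA : A.PosSemidef) :
    hA.sqrt = Unitary.conjStarAlgAut ℝ _ hA.1.eigenvectorUnitary
      (diagonal ((↑) ∘ (√·) ∘ hA.1.eigenvalues)) := by
  rw [Unitary.conjStarAlgAut_apply]
  rfl

theorem sqrt_mul_self (hA : A.PosSemidef) : hA.sqrt * hA.sqrt = A := by
  conv_rhs => rw [hA.1.spectral_theorem]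
  rw [sqrt_eq_conjStarAlgAut, ← map_mul, diagonal_mul_diagonal]
  congr 2 with i
  simp [Real.mul_self_sqrt (hA.eigenvalues_nonneg i)]

theorem isHermitian_sqrt (hA : A.PosSemidef) : hA.sqrt.IsHermitian := by
  rw [sqrt_eq_conjStarAlgAut]
  exact ((isHermitian_diagonal _).isSelfAdjoint.map _).isHermitian

theorem toEuclideanLin_sqrt_mul_self (hA : A.PosSemidef) :
    toEuclideanLin hA.sqrt * toEuclideanLin hA.sqrt = toEuclideanLin A := by
  rw [Module.End.mul_eq_comp, ← toLpLin_mul_same, sqrt_mul_self]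

theorem lamMinNZ_nonneg (hA : A.PosSemidef) : 0 ≤ lamMinNZ A :=
  Real.sInf_nonneg fun _ hr => hA.nonneg_of_hasEigenvalue hr.2

theorem norm_toEuclideanLin_le_lamMax (hA : A.PosSemidef) (u : EuclideanSpace ℝ m) :
    ‖toEuclideanLin A u‖ ≤ lamMax A * ‖u‖ := by
  have hbdd : BddAbove {μ | Module.End.HasEigenvalue (toLin' A) μ} :=
    (Module.End.finite_hasEigenvalue _).bddAbove
  refine (isSymmetric_toEuclideanLin_iff.2 hA.isHermitian).norm_apply_le_of_abs_le
    (Real.sSup_nonneg fun _ => hA.nonneg_of_hasEigenvalue) (fun μ hμ => ?_) u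
  rw [hasEigenvalue_toEuclideanLin_iff] at hμ
  rw [abs_of_nonneg (hA.nonneg_of_hasEigenvalue hμ)]
  exact le_csSup hbdd hμ

theorem sq_norm_toEuclideanLin_sqrt_le (hA : A.PosSemidef) (y : EuclideanSpace ℝ m) :
    ‖toEuclideanLin hA.sqrt y‖ ^ 2 ≤
      1 / lamMinNZ A * ‖toEuclideanLin hA.sqrt (toEuclideanLin hA.sqrt y)‖ ^ 2 := by
  set S := toEuclideanLin hA.sqrt
  have hS : S.IsSymmetric := isSymmetric_toEuclideanLin_iff.2 hA.isHermitian_sqrt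
  set N := {μ | μ ≠ 0 ∧ Module.End.HasEigenvalue (toLin' A) μ}
  have hN : ∀ μ, μ ≠ 0 → Module.End.HasEigenvalue (S * S) μ → μ ∈ N := fun μ hμ hμS =>
    ⟨hμ, hasEigenvalue_toEuclideanLin_iff.1 (hA.toEuclideanLin_sqrt_mul_self ▸ hμS)⟩
  rcases N.eq_empty_or_nonempty with hempty | hne
  · -- here `lamMinNZ A = sInf ∅ = 0`, so `S y = 0` has to be shown
    have hall : ∀ c, c * ‖S y‖ ^ 2 ≤ ‖S (S y)‖ ^ 2 := fun c =>
      hS.mul_sq_norm_apply_le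
        (fun μ hμ hμS => (Set.eq_empty_iff_forall_notMem.1 hempty μ (hN μ hμ hμS)).elim) y
    have hzero : ‖S y‖ ^ 2 ≤ 0 := by
      by_contra! hpos
      have := hall ((‖S (S y)‖ ^ 2 + 1) / ‖S y‖ ^ 2)
      rw [div_mul_cancel₀ _ hpos.ne'] at this
      linarith
    exact hzero.trans (mul_nonneg (one_div_nonneg.2 hA.lamMinNZ_nonneg) (sq_nonneg _))
  · have hfin : N.Finite := (Module.End.finite_hasEigenvalue _).subset fun _ hr => hr.2
    have hmem : lamMinNZ A ∈ N := hne.csInf_mem hfin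
    have hpos : 0 < lamMinNZ A := (hA.lamMinNZ_nonneg).lt_of_ne' hmem.1
    rw [one_div, inv_mul_eq_div, le_div_iff₀ hpos, mul_comm]
    exact hS.mul_sq_norm_apply_le (fun μ hμ hμS => csInf_le hfin.bddBelow (hN μ hμ hμS)) y

end PosSemidef

end Matrix

section Hessian

variable {E : Type*} [NormedAddCommGroup E] [InnerProductSpace ℝ E] [CompleteSpace E]
  {f : E → ℝ} {g : E → E} {H : E → E →L[ℝ] E}

theorem isSymmetric_of_hasGradientAt_of_hasFDerivAt (hg : ∀ z, HasGradientAt f (g z) z)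
    (hH : ∀ z, HasFDerivAt g (H z) z) (z : E) : (H z : E →ₗ[ℝ] E).IsSymmetric := by
  set J := (InnerProductSpace.toDual ℝ E).toContinuousLinearEquiv.toContinuousLinearMap
  have hsymm := second_derivative_symmetric (fun y => (hg y).hasFDerivAt)
    (J.hasFDerivAt.comp z (hH z))
  intro v w
  simpa [J, InnerProductSpace.toDual_apply_apply, real_inner_comm] using hsymm v w

theorem norm_apply_le_of_hasGradientAt_of_hasFDerivAt [FiniteDimensional ℝ E]
    (hg : ∀ z, HasGradientAt f (g z) z) (hH : ∀ z, HasFDerivAt g (H z) z) (z : E) {μ L : ℝ}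
    (hμ : 0 ≤ μ) (hμL : μ ≤ L) (hlow : ∀ w, μ * ‖w‖ ^ 2 ≤ ⟪H z w, w⟫_ℝ)
    (hup : ∀ w, ⟪H z w, w⟫_ℝ ≤ L * ‖w‖ ^ 2) (w : E) : ‖H z w‖ ≤ L * ‖w‖ :=
  (isSymmetric_of_hasGradientAt_of_hasFDerivAt hg hH z).norm_apply_le_of_abs_le (hμ.trans hμL)
    (fun ν hν => abs_le.2 ⟨by linarith [hν.le_of_le_inner hlow], hν.le_of_inner_le hup⟩) w

end Hessian

section Blocks

variable {n p : ℕ}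

theorem sq_norm_eq_sum_sq_norm_blk (x : Vnp n p) : ‖x‖ ^ 2 = ∑ i, ‖blk x i‖ ^ 2 := by
  simp only [EuclideanSpace.real_norm_sq_eq, Fintype.sum_prod_type]
  rfl

theorem norm_le_of_forall_norm_blk_le {d w : Vnp n p} {C : ℝ} (hC : 0 ≤ C)
    (h : ∀ i, ‖blk d i‖ ≤ C * ‖blk w i‖) : ‖d‖ ≤ C * ‖w‖ := by
  refine (pow_le_pow_iff_left₀ (norm_nonneg _) (by positivity) two_ne_zero).1 ?_
  rw [mul_pow, sq_norm_eq_sum_sq_norm_blk, sq_norm_eq_sum_sq_norm_blk, Finset.mul_sum]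
  exact Finset.sum_le_sum fun i _ => mul_pow C _ 2 ▸ pow_le_pow_left₀ (norm_nonneg _) (h i) 2

theorem norm_aggGrad_sub_le {g : Fin n → Ep p → Ep p} {L : ℝ} (hL : 0 ≤ L)
    (hg : ∀ i a b, ‖g i a - g i b‖ ≤ L * ‖a - b‖) (x y : Vnp n p) :
    ‖aggGrad g x - aggGrad g y‖ ≤ L * ‖x - y‖ :=
  norm_le_of_forall_norm_blk_le hL fun i => hg i (blk x i) (blk y i)

theorem norm_aggHess_le {h : Fin n → Ep p → (Ep p →L[ℝ] Ep p)} {L : ℝ} (hL : 0 ≤ L)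
    (hh : ∀ i z w, ‖h i z w‖ ≤ L * ‖w‖) (x w : Vnp n p) : ‖aggHess h x w‖ ≤ L * ‖w‖ :=
  norm_le_of_forall_norm_blk_le hL fun i => hh i (blk x i) (blk w i)

end Blocks

theorem sqrt_apply_dual_error_eq {E : Type*} [AddCommGroup E] [Module ℝ E] {S T : E →ₗ[ℝ] E}
    (hST : ∀ z, S (S z) = T z) {x x' v v' vs d gx gx' gs : E} {α ε : ℝ}
    (hprimal : d + ε • (x - x') = gx + S v + α • T x) (hdual : v' = v + α • S x')
    (hopt : gs + S vs = 0) :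
    S (v' - vs) = ε • (x - x') + ((d - (gx - gx') - α • T (x - x')) + (gs - gx')) := by
  have hSv : S v = d + ε • (x - x') - gx - α • T x := by rw [hprimal]; abel
  rw [map_sub, hdual, map_add, map_smul, hST, hSv, eq_neg_of_add_eq_zero_right hopt, map_sub]
  module

theorem norm_newton_remainder_le {n p : ℕ} {g : Fin n → Ep p → Ep p}
    {h : Fin n → Ep p → (Ep p →L[ℝ] Ep p)} {A : Matrix (Fin n × Fin p) (Fin n × Fin p) ℝ}
    (hA : A.PosSemidef) {L α : ℝ} (hL : 0 ≤ L) (hα : 0 ≤ α)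
    (hg : ∀ i a b, ‖g i a - g i b‖ ≤ L * ‖a - b‖) (hh : ∀ i z w, ‖h i z w‖ ≤ L * ‖w‖)
    (x y : Vnp n p) :
    ‖aggHess h x (x - y) - (aggGrad g x - aggGrad g y) - α • toEuclideanLin A (x - y)‖ ≤
      (2 * L + α * lamMax A) * ‖x - y‖ := by
  have hT : ‖α • toEuclideanLin A (x - y)‖ ≤ α * (lamMax A * ‖x - y‖) := by
    rw [norm_smul, Real.norm_of_nonneg hα]
    exact mul_le_mul_of_nonneg_left (hA.norm_toEuclideanLin_le_lamMax _) hα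
  calc _ ≤ L * ‖x - y‖ + L * ‖x - y‖ + α * (lamMax A * ‖x - y‖) :=
        norm_sub_le_of_le (norm_sub_le_of_le (norm_aggHess_le hL hh _ _)
          (norm_aggGrad_sub_le hL hg _ _)) hT
    _ = _ := by ring

theorem newton_tracking_dual_error_bound_general
    {n p : ℕ}
    (W : Matrix (Fin n) (Fin n) ℝ)
    (hpsd : (IWmat p W).PosSemidef)
    (f : Fin n → Ep p → ℝ) (g : Fin n → Ep p → Ep p)
    (h : Fin n → Ep p → (Ep p →L[ℝ] Ep p))
    (μf Lf : ℝ) (hμpos : 0 < μf) (hμL : μf ≤ Lf)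
    (hg : ∀ i z, HasGradientAt (f i) (g i z) z)
    (hh : ∀ i z, HasFDerivAt (g i) (h i z) z)
    (hlow : ∀ i z w, μf * ‖w‖ ^ 2 ≤ ⟪(h i z) w, w⟫_ℝ)
    (hup : ∀ i z w, ⟪(h i z) w, w⟫_ℝ ≤ Lf * ‖w‖ ^ 2)
    (α ε : ℝ) (hα : 0 < α) (hε : 0 < ε)
    (x v : ℕ → Vnp n p)
    (hprimal : ∀ t, aggHess h (x t) (x t - x (t + 1)) + ε • (x t - x (t + 1)) =
      aggGrad g (x t) + Matrix.toEuclideanLin hpsd.sqrt (v t)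
        + α • Matrix.toEuclideanLin (IWmat p W) (x t))
    (hdual : ∀ t, v (t + 1) = v t + α • Matrix.toEuclideanLin hpsd.sqrt (x (t + 1)))
    (xs vs : Vnp n p)
    (hK1 : aggGrad g xs + Matrix.toEuclideanLin hpsd.sqrt vs = 0)
    (t : ℕ)
    (hcol : ∃ y : Vnp n p, v (t + 1) - vs = Matrix.toEuclideanLin hpsd.sqrt y)
    (β φ : ℝ) (hβ : 1 < β) (hφ : 1 < φ) :
    ‖v (t + 1) - vs‖ ^ 2 ≤ (1 / lamMinNZ (IWmat p W)) *
      ((β * ε ^ 2 / (β - 1)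
          + β * φ * (2 * Lf + α * lamMax (IWmat p W)) ^ 2 / (φ - 1))
            * ‖x (t + 1) - x t‖ ^ 2
        + β * φ * Lf ^ 2 * ‖x (t + 1) - xs‖ ^ 2) := by
  have hLf : 0 ≤ Lf := hμpos.le.trans hμL
  have hhess : ∀ i z w, ‖h i z w‖ ≤ Lf * ‖w‖ := fun i z =>
    norm_apply_le_of_hasGradientAt_of_hasFDerivAt (hg i) (hh i) z hμpos.le hμL (hlow i z)
      (hup i z)
  have hgrad : ∀ i a b, ‖g i a - g i b‖ ≤ Lf * ‖a - b‖ := fun i a b =>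
    convex_univ.norm_image_sub_le_of_norm_hasFDerivWithin_le
      (fun z _ => (hh i z).hasFDerivWithinAt) (fun z _ => (h i z).opNorm_le_bound hLf (hhess i z))
      trivial trivial
  have hres := sqrt_apply_dual_error_eq (gx' := aggGrad g (x (t + 1)))
    (LinearMap.congr_fun hpsd.toEuclideanLin_sqrt_mul_self) (hprimal t) (hdual t) hK1
  obtain ⟨y, hy⟩ := hcol
  calc ‖v (t + 1) - vs‖ ^ 2
      ≤ 1 / lamMinNZ (IWmat p W) * ‖Matrix.toEuclideanLin hpsd.sqrt (v (t + 1) - vs)‖ ^ 2 := by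
        rw [hy]; exact hpsd.sq_norm_toEuclideanLin_sqrt_le y
    _ ≤ 1 / lamMinNZ (IWmat p W) * (β / (β - 1) * (ε * ‖x (t + 1) - x t‖) ^ 2 + β *
          (φ / (φ - 1) * ((2 * Lf + α * lamMax (IWmat p W)) * ‖x (t + 1) - x t‖) ^ 2
            + φ * (Lf * ‖x (t + 1) - xs‖) ^ 2)) := by
        have hlam := hpsd.lamMinNZ_nonneg
        rw [hres]
        gcongr
        refine norm_add_add_sq_le_of_one_lt hβ hφ ?_ ?_ ?_
        · rw [norm_smul, Real.norm_of_nonneg hε.le, norm_sub_rev]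
        · rw [norm_sub_rev (x (t + 1))]
          exact norm_newton_remainder_le hpsd hLf hα.le hgrad hhess _ _
        · rw [norm_sub_rev (x (t + 1))]
          exact norm_aggGrad_sub_le hLf hgrad _ _
    _ = _ := by ring

/-- The dual-error bound: if `v^{t+1} − v*` lies in the column space of `(I−𝐖)^{1/2}`, then
`‖v^{t+1} − v*‖²` is bounded via `‖x^{t+1} − x^t‖²` and `‖x^{t+1} − x*‖²`. -/
theorem newton_tracking_dual_error_bound
    {n p : ℕ} (hn : 0 < n) (hp : 0 < p)
    (W : Matrix (Fin n) (Fin n) ℝ)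
    (hWnonneg : ∀ i j, 0 ≤ W i j) (hWsymm : W.IsSymm)
    (hWstoch : W *ᵥ (fun _ => (1 : ℝ)) = fun _ => 1)
    (hWker : ∀ y : Fin n → ℝ, (1 - W) *ᵥ y = 0 ↔ ∃ c : ℝ, y = fun _ => c)
    (hpsd : (IWmat p W).PosSemidef)
    (f : Fin n → Ep p → ℝ) (g : Fin n → Ep p → Ep p)
    (h : Fin n → Ep p → (Ep p →L[ℝ] Ep p))
    (μf Lf : ℝ) (hμpos : 0 < μf) (hμL : μf ≤ Lf)
    (hC2 : ∀ i, ContDiff ℝ 2 (f i))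
    (hg : ∀ i z, HasGradientAt (f i) (g i z) z)
    (hh : ∀ i z, HasFDerivAt (g i) (h i z) z)
    (hlow : ∀ i z w, μf * ‖w‖ ^ 2 ≤ ⟪(h i z) w, w⟫_ℝ)
    (hup : ∀ i z w, ⟪(h i z) w, w⟫_ℝ ≤ Lf * ‖w‖ ^ 2)
    (α ε : ℝ) (hα : 0 < α) (hε : 0 < ε)
    (x v : ℕ → Vnp n p)
    (hprimal : ∀ t, aggHess h (x t) (x t - x (t + 1)) + ε • (x t - x (t + 1)) =
      aggGrad g (x t) + Matrix.toEuclideanLin hpsd.sqrt (v t)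
        + α • Matrix.toEuclideanLin (IWmat p W) (x t))
    (hdual : ∀ t, v (t + 1) = v t + α • Matrix.toEuclideanLin hpsd.sqrt (x (t + 1)))
    (xs vs : Vnp n p)
    (hK1 : aggGrad g xs + Matrix.toEuclideanLin hpsd.sqrt vs = 0)
    (hK2 : Matrix.toEuclideanLin hpsd.sqrt xs = 0)
    (t : ℕ)
    (hcol : ∃ y : Vnp n p, v (t + 1) - vs = Matrix.toEuclideanLin hpsd.sqrt y)
    (β φ : ℝ) (hβ : 1 < β) (hφ : 1 < φ) :
    ‖v (t + 1) - vs‖ ^ 2 ≤ (1 / lamMinNZ (IWmat p W)) *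
      ((β * ε ^ 2 / (β - 1)
          + β * φ * (2 * Lf + α * lamMax (IWmat p W)) ^ 2 / (φ - 1))
            * ‖x (t + 1) - x t‖ ^ 2
        + β * φ * Lf ^ 2 * ‖x (t + 1) - xs‖ ^ 2) :=
  newton_tracking_dual_error_bound_general W hpsd f g h μf Lf hμpos hμL hg hh hlow hup α ε hα hε x v
    hprimal hdual xs vs hK1 t hcol β φ hβ hφ
end
end
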